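/- arXiv:2306.00730 — 2 statements merged into one kernel-verified Lean document; each statement's English description precedes it below -/
import Mathlib

section
/- If a density matrix ρ on ℂ^D satisfies tr(ρ²) ≥ 1 - δ, then there exists a unit vector φ such that the trace norm ‖ρ - |φ⟩⟨φ|‖₁ ≤ 2δ. -/
/-!
Diagonalize `ρ = U diag(λ) Uᴴ` and let `φ` be an eigenvector of a largest eigenvalue `λ₀`.
Since the `λᵢ` are a probability vector, `tr ρ² = ∑ λᵢ² ≤ λ₀`, so `1 - λ₀ ≤ δ`.
In the same basis `ρ - |φ⟩⟨φ|` is diagonal with entries `λ₀ - 1` and the remaining `λᵢ`,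
so its trace norm is `(1 - λ₀) + (1 - λ₀) ≤ 2δ`.
-/

open Matrix ComplexOrder

/-- The trace norm of a complex matrix: `tr √(AᴴA)`. -/
noncomputable def traceNorm {D : ℕ} (A : Matrix (Fin D) (Fin D) ℂ) : ℝ :=
  (((Matrix.posSemidef_conjTranspose_mul_self A).1.eigenvectorUnitary.1 *
    diagonal (fun i => ((Real.sqrt ((Matrix.posSemidef_conjTranspose_mul_self A).1.eigenvalues i) : ℝ) : ℂ)) *
    (star (Matrix.posSemidef_conjTranspose_mul_self A).1.eigenvectorUnitary :
      Matrix (Fin D) (Fin D) ℂ)).trace).re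

open Unitary

namespace Matrix

variable {n 𝕜 : Type*} [Fintype n] [DecidableEq n] [RCLike 𝕜]

theorem trace_conjStarAlgAut (U : unitaryGroup n 𝕜) (M : Matrix n n 𝕜) :
    (conjStarAlgAut 𝕜 _ U M).trace = M.trace := by
  rw [conjStarAlgAut_apply, trace_mul_cycle, coe_star_mul_self, one_mul]

theorem conjStarAlgAut_diagonal_single (U : unitaryGroup n 𝕜) (i : n) :
    conjStarAlgAut 𝕜 _ U (diagonal (Pi.single i 1)) =
      vecMulVec ((U : Matrix n n 𝕜) *ᵥ Pi.single i 1)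
        (star ((U : Matrix n n 𝕜) *ᵥ Pi.single i 1)) := by
  rw [conjStarAlgAut_apply, diagonal_single, single_eq_single_vecMulVec_single, mul_vecMulVec,
    vecMulVec_mul, star_mulVec, star_eq_conjTranspose]
  simp

namespace IsHermitian

variable {A : Matrix n n 𝕜} (hA : A.IsHermitian)
include hA

theorem trace_mul_self : (A * A).trace = ∑ i, ((hA.eigenvalues i ^ 2 : ℝ) : 𝕜) := by
  rw [show A * A = _ from congrArg (fun M ↦ M * M) hA.spectral_theorem, ← map_mul,
    trace_conjStarAlgAut, diagonal_mul_diagonal, trace_diagonal]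
  simp [sq]

theorem sub_vecMulVec_eigenvectorBasis (i : n) :
    A - vecMulVec ⇑(hA.eigenvectorBasis i) (star ⇑(hA.eigenvectorBasis i)) =
      conjStarAlgAut 𝕜 _ hA.eigenvectorUnitary
        (diagonal (RCLike.ofReal ∘ (hA.eigenvalues - Pi.single i 1))) := by
  rw [← eigenvectorUnitary_mulVec, ← conjStarAlgAut_diagonal_single]
  nth_rw 1 [hA.spectral_theorem]
  rw [← map_sub, diagonal_sub]
  congr 2
  ext j
  by_cases h : j = i <;> simp [h]

end IsHermitian

end Matrix

open scoped MatrixOrder in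
theorem traceNorm_eq_re_trace_of_mul_self {D : ℕ} {A B : Matrix (Fin D) (Fin D) ℂ}
    (hB : B.PosSemidef) (hBA : B * B = Aᴴ * A) : traceNorm A = B.trace.re := by
  have hA := posSemidef_conjTranspose_mul_self A
  rw [← CFC.sqrt_unique hBA hB.nonneg, CFC.sqrt_eq_real_sqrt _ hA.nonneg, cfcₙ_eq_cfc,
    hA.1.cfc_eq, IsHermitian.cfc, conjStarAlgAut_apply]
  rfl

theorem traceNorm_conjStarAlgAut_diagonal {D : ℕ} (U : unitaryGroup (Fin D) ℂ) (d : Fin D → ℝ) :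
    traceNorm (conjStarAlgAut ℂ _ U (diagonal (RCLike.ofReal ∘ d))) = ∑ i, |d i| := by
  set B := conjStarAlgAut ℂ _ U (diagonal (RCLike.ofReal ∘ fun i ↦ |d i|))
  have hB : B.PosSemidef := by
    simpa [B, star_eq_conjTranspose] using
      (posSemidef_diagonal_iff.mpr fun i ↦ by simp).mul_mul_conjTranspose_same
        (U : Matrix (Fin D) (Fin D) ℂ)
  have hBB : B * B = (conjStarAlgAut ℂ _ U (diagonal (RCLike.ofReal ∘ d)))ᴴ *
      conjStarAlgAut ℂ _ U (diagonal (RCLike.ofReal ∘ d)) := by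
    rw [← star_eq_conjTranspose, ← map_star, ← map_mul, ← map_mul, star_eq_conjTranspose,
      diagonal_conjTranspose, diagonal_mul_diagonal, diagonal_mul_diagonal]
    congr 2
    ext i
    simp [← Complex.ofReal_mul, abs_mul_abs_self]
  rw [traceNorm_eq_re_trace_of_mul_self hB hBB, trace_conjStarAlgAut, trace_diagonal]
  simp

theorem Finset.sum_sq_le_mul_sum {ι : Type*} (s : Finset ι) {p : ι → ℝ} {M : ℝ}
    (hp : ∀ i ∈ s, 0 ≤ p i) (hM : ∀ i ∈ s, p i ≤ M) : ∑ i ∈ s, p i ^ 2 ≤ M * ∑ i ∈ s, p i := by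
  rw [Finset.mul_sum]
  exact Finset.sum_le_sum fun i hi ↦ by
    rw [sq]
    exact mul_le_mul_of_nonneg_right (hM i hi) (hp i hi)

theorem sum_abs_sub_single_one {ι : Type*} [Fintype ι] [DecidableEq ι] {p : ι → ℝ}
    (hp : ∀ i, 0 ≤ p i) (hsum : ∑ i, p i = 1) (i₀ : ι) :
    ∑ i, |p i - (Pi.single i₀ 1 : ι → ℝ) i| = 2 * (1 - p i₀) := by
  have hrest : ∑ i ∈ Finset.univ.erase i₀, p i = 1 - p i₀ := by
    rw [← hsum, ← Finset.add_sum_erase _ _ (Finset.mem_univ i₀), add_sub_cancel_left]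
  have hle : p i₀ ≤ 1 := by
    linarith [Finset.sum_nonneg fun i (_ : i ∈ Finset.univ.erase i₀) ↦ hp i]
  rw [← Finset.add_sum_erase _ _ (Finset.mem_univ i₀), Pi.single_eq_same,
    Finset.sum_congr rfl fun i hi ↦ by
      rw [Pi.single_eq_of_ne (Finset.ne_of_mem_erase hi), sub_zero, abs_of_nonneg (hp i)],
    hrest, abs_of_nonpos (by linarith)]
  ring

theorem stmt_0_general {D : ℕ} (ρ : Matrix (Fin D) (Fin D) ℂ) (δ : ℝ)
    (hρ : ρ.PosSemidef) (htr : ρ.trace = 1)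
    (hpur : 1 - δ ≤ ((ρ * ρ).trace).re) :
    ∃ φ : Fin D → ℂ, (∑ i, ‖φ i‖ ^ 2 = 1) ∧
      traceNorm (ρ - Matrix.vecMulVec φ (star φ)) ≤ 2 * δ := by
  have hsum : ∑ i, hρ.1.eigenvalues i = 1 := by
    simpa using congrArg Complex.re (hρ.1.trace_eq_sum_eigenvalues.symm.trans htr)
  have hpurity : 1 - δ ≤ ∑ i, hρ.1.eigenvalues i ^ 2 := by
    rwa [hρ.1.trace_mul_self, Complex.re_sum] at hpur
  obtain ⟨i₀, -, hmax⟩ := Finset.exists_max_image Finset.univ hρ.1.eigenvalues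
    (Finset.nonempty_of_sum_ne_zero (hsum ▸ one_ne_zero))
  refine ⟨hρ.1.eigenvectorBasis i₀, ?_, ?_⟩
  · rw [← EuclideanSpace.norm_sq_eq, hρ.1.eigenvectorBasis.orthonormal.1 i₀, one_pow]
  · have hmax_ge : ∑ i, hρ.1.eigenvalues i ^ 2 ≤ hρ.1.eigenvalues i₀ := by
      simpa [hsum] using Finset.univ.sum_sq_le_mul_sum (fun i _ ↦ hρ.eigenvalues_nonneg i) hmax
    rw [hρ.1.sub_vecMulVec_eigenvectorBasis, traceNorm_conjStarAlgAut_diagonal]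
    simp only [Pi.sub_apply]
    rw [sum_abs_sub_single_one hρ.eigenvalues_nonneg hsum]
    linarith

theorem stmt_0 {D : ℕ} (ρ : Matrix (Fin D) (Fin D) ℂ) (δ : ℝ) (hδ : 0 ≤ δ)
    (hρ : ρ.PosSemidef) (htr : ρ.trace = 1)
    (hpur : 1 - δ ≤ ((ρ * ρ).trace).re) :
    ∃ φ : Fin D → ℂ, (∑ i, ‖φ i‖ ^ 2 = 1) ∧
      traceNorm (ρ - Matrix.vecMulVec φ (star φ)) ≤ 2 * δ :=
  stmt_0_general ρ δ hρ htr hpur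
end

section
/- Let Z be a square complex matrix with ‖I - Z†Z‖ ≤ δ in operator norm. Then there exists a unitary matrix O with ‖Z - O‖ ≤ √δ. The analogous statement holds with Z real and O orthogonal. -/
/-!
Write `Z = O P` with `O` unitary and `P = √(Zᴴ Z)` (polar decomposition): since `‖P x‖ = ‖Z x‖`,
the map `P x ↦ Z x` is a well-defined isometry on the range of `P`, and it extends to an isometry
`O` of the whole space. Then `Z - O = O (P - 1)`, so `‖Z - O‖ = ‖P - 1‖`, and the scalar inequality
`|√x - 1| ≤ √|x - 1|` on the spectrum of `Zᴴ Z` gives `‖P - 1‖ ≤ √‖1 - Zᴴ Z‖`.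
-/

open Matrix ComplexOrder

/-- The operator norm of a square matrix over `ℂ` or `ℝ`, acting on Euclidean space. -/
noncomputable def opNorm {𝕜 : Type*} [RCLike 𝕜] {n : ℕ} (A : Matrix (Fin n) (Fin n) 𝕜) : ℝ :=
  ‖Matrix.toEuclideanCLM (𝕜 := 𝕜) A‖

open scoped Matrix.Norms.L2Operator

theorem Real.abs_sqrt_sub_one_le_sqrt_abs_sub_one {x : ℝ} (hx : 0 ≤ x) :
    |√x - 1| ≤ √|x - 1| := by
  rw [Real.le_sqrt (abs_nonneg _) (abs_nonneg _), sq_abs]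
  have hsq := Real.sq_sqrt hx
  have hnonneg := Real.sqrt_nonneg x
  rcases le_total x 1 with h | h
  · rw [abs_of_nonpos (by linarith)]; nlinarith
  · rw [abs_of_nonneg (by linarith)]; nlinarith

open LinearMap in
theorem LinearMap.exists_linearIsometry_comp_eq_of_norm_eq {𝕜 E : Type*} [RCLike 𝕜]
    [NormedAddCommGroup E] [InnerProductSpace 𝕜 E] [FiniteDimensional 𝕜 E]
    {T P : E →ₗ[𝕜] E} (h : ∀ x, ‖P x‖ = ‖T x‖) :
    ∃ U : E →ₗᵢ[𝕜] E, U.toLinearMap ∘ₗ P = T := by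
  have hker : ker P ≤ ker T := fun x hx => by
    rw [mem_ker, ← norm_eq_zero, ← h, mem_ker.mp hx, norm_zero]
  let L : range P →ₗ[𝕜] E := (ker P).liftQ T hker ∘ₗ P.quotKerEquivRange.symm.toLinearMap
  have hL : ∀ x, L ⟨P x, mem_range_self P x⟩ = T x := fun x => by simp [L]
  let L' : range P →ₗᵢ[𝕜] E := ⟨L, by rintro ⟨-, x, rfl⟩; simp [hL, h]⟩
  exact ⟨L'.extend, LinearMap.ext fun x =>
    (L'.extend_apply ⟨P x, mem_range_self P x⟩).trans (hL x)⟩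

namespace Matrix

variable {𝕜 n : Type*} [RCLike 𝕜] [Fintype n] [DecidableEq n]

theorem IsHermitian.l2_opNorm_cfc {A : Matrix n n 𝕜} (hA : A.IsHermitian) (f : ℝ → ℝ) :
    ‖cfc f A‖ = ‖f ∘ hA.eigenvalues‖ := by
  rw [hA.cfc_eq, IsHermitian.cfc, Unitary.conjStarAlgAut_apply,
    CStarRing.norm_mul_mem_unitary _ (Unitary.star_mem (SetLike.coe_mem _)),
    CStarRing.norm_mem_unitary_mul _ (SetLike.coe_mem _), l2_opNorm_diagonal]
  simp [Pi.norm_def]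

theorem PosSemidef.spectrum_nonneg {A : Matrix n n 𝕜} (hA : A.PosSemidef) {x : ℝ}
    (hx : x ∈ spectrum ℝ A) : 0 ≤ x := by
  obtain ⟨i, rfl⟩ := hA.1.spectrum_real_eq_range_eigenvalues ▸ hx
  exact hA.eigenvalues_nonneg i

theorem PosSemidef.cfc_sqrt_mul_self {A : Matrix n n 𝕜} (hA : A.PosSemidef) :
    cfc Real.sqrt A * cfc Real.sqrt A = A := by
  rw [← cfc_mul Real.sqrt Real.sqrt A]
  conv_rhs => rw [← cfc_id ℝ A hA.1]
  exact cfc_congr fun x hx => Real.mul_self_sqrt (hA.spectrum_nonneg hx)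

theorem PosSemidef.l2_opNorm_cfc_sqrt_sub_one_le {A : Matrix n n 𝕜} (hA : A.PosSemidef) :
    ‖cfc Real.sqrt A - 1‖ ≤ √‖1 - A‖ := by
  have hA' : IsSelfAdjoint A := hA.1
  have hsqrt : cfc Real.sqrt A - 1 = cfc (fun x => √x - 1) A := by
    rw [cfc_sub Real.sqrt (fun _ => 1) A, cfc_const_one ℝ A]
  have hone : 1 - A = cfc (fun x : ℝ => 1 - x) A := by
    rw [cfc_sub (fun _ : ℝ => 1) (fun x => x) A, cfc_const_one ℝ A, cfc_id' ℝ A]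
  rw [hsqrt, hone, hA.1.l2_opNorm_cfc, hA.1.l2_opNorm_cfc]
  refine pi_norm_le_iff_of_nonneg (Real.sqrt_nonneg _) |>.mpr fun i => ?_
  calc ‖√(hA.1.eigenvalues i) - 1‖ ≤ √|hA.1.eigenvalues i - 1| :=
        Real.abs_sqrt_sub_one_le_sqrt_abs_sub_one (hA.eigenvalues_nonneg i)
    _ ≤ _ := by
        gcongr
        rw [abs_sub_comm]
        exact norm_le_pi_norm (fun i => 1 - hA.1.eigenvalues i) i

theorem exists_mem_unitaryGroup_mul_eq_of_conjTranspose_mul_self_eq {P Z : Matrix n n 𝕜}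
    (h : Pᴴ * P = Zᴴ * Z) : ∃ U ∈ unitaryGroup n 𝕜, U * P = Z := by
  let T := toEuclideanCLM (n := n) (𝕜 := 𝕜)
  have hgram : ∀ A : Matrix n n 𝕜, (T A).adjoint ∘L T A = T (Aᴴ * A) := fun A => by
    rw [← star_eq_conjTranspose, map_mul, map_star]; rfl
  have hnorm : ∀ x, ‖T P x‖ = ‖T Z x‖ := fun x => by
    rw [← sq_eq_sq₀ (norm_nonneg _) (norm_nonneg _),
      ContinuousLinearMap.apply_norm_sq_eq_inner_adjoint_left,
      ContinuousLinearMap.apply_norm_sq_eq_inner_adjoint_left, hgram, hgram, h]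
  obtain ⟨U, hU⟩ := LinearMap.exists_linearIsometry_comp_eq_of_norm_eq hnorm
  let u := Unitary.linearIsometryEquiv.symm (U.toLinearIsometryEquiv rfl)
  refine ⟨T.symm u, Unitary.map_mem _ u.2, ?_⟩
  rw [← T.symm_apply_apply P, ← map_mul, T.symm_apply_eq]
  ext1 x
  exact congr($hU x)

theorem exists_mem_unitaryGroup_l2_opNorm_sub_le (Z : Matrix n n 𝕜) :
    ∃ O ∈ unitaryGroup n 𝕜, ‖Z - O‖ ≤ √‖1 - Zᴴ * Z‖ := by
  have hZZ := posSemidef_conjTranspose_mul_self Z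
  set P := cfc Real.sqrt (Zᴴ * Z)
  have hP : star P = P := cfc_predicate Real.sqrt (Zᴴ * Z)
  obtain ⟨O, hO, hOP⟩ := exists_mem_unitaryGroup_mul_eq_of_conjTranspose_mul_self_eq
    (P := P) (Z := Z) (by rw [← star_eq_conjTranspose, hP, hZZ.cfc_sqrt_mul_self])
  refine ⟨O, hO, ?_⟩
  calc ‖Z - O‖ = ‖O * (P - 1)‖ := by rw [mul_sub, mul_one, hOP]
    _ = ‖P - 1‖ := CStarRing.norm_mem_unitary_mul _ hO
    _ ≤ _ := hZZ.l2_opNorm_cfc_sqrt_sub_one_le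

end Matrix

theorem opNorm_eq_l2_opNorm {𝕜 : Type*} [RCLike 𝕜] {n : ℕ} (A : Matrix (Fin n) (Fin n) 𝕜) :
    opNorm A = ‖A‖ :=
  rfl

theorem Matrix.exists_mem_unitaryGroup_opNorm_sub_le {𝕜 : Type*} [RCLike 𝕜] {n : ℕ}
    (Z : Matrix (Fin n) (Fin n) 𝕜) {δ : ℝ} (h : opNorm (1 - Zᴴ * Z) ≤ δ) :
    ∃ O ∈ unitaryGroup (Fin n) 𝕜, opNorm (Z - O) ≤ √δ := by
  obtain ⟨O, hO, hle⟩ := Z.exists_mem_unitaryGroup_l2_opNorm_sub_le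
  rw [opNorm_eq_l2_opNorm] at h
  exact ⟨O, hO, by rw [opNorm_eq_l2_opNorm]; exact hle.trans (Real.sqrt_le_sqrt h)⟩

theorem stmt_11 :
    (∀ (n : ℕ) (Z : Matrix (Fin n) (Fin n) ℂ) (δ : ℝ),
      opNorm ((1 : Matrix (Fin n) (Fin n) ℂ) - Zᴴ * Z) ≤ δ →
      ∃ O ∈ Matrix.unitaryGroup (Fin n) ℂ, opNorm (Z - O) ≤ Real.sqrt δ) ∧
    (∀ (n : ℕ) (Z : Matrix (Fin n) (Fin n) ℝ) (δ : ℝ),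
      opNorm ((1 : Matrix (Fin n) (Fin n) ℝ) - Zᵀ * Z) ≤ δ →
      ∃ O ∈ Matrix.orthogonalGroup (Fin n) ℝ, opNorm (Z - O) ≤ Real.sqrt δ) := by
  refine ⟨fun n Z δ h => Z.exists_mem_unitaryGroup_opNorm_sub_le h, fun n Z δ h => ?_⟩
  rw [← conjTranspose_eq_transpose_of_trivial] at h
  exact Z.exists_mem_unitaryGroup_opNorm_sub_le h
end
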